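/- arXiv:2304.08783 — 2 statements merged into one kernel-verified Lean document; each statement's English description precedes it below -/
import Mathlib

section
/- Let G=(V0,V1,E) be a connectivity game and Γ(G)=(N,Son) its derivation forest. For every node X∈N with |X|>1, the connectivity sub-game G(X) played on the vertex set X (with edges E∩(X×X), where player 0's objective is to visit every vertex of X infinitely often) is forced-connected. -/
namespace Games

universe u

variable {V : Type u}

/-- A connectivity game: player 0's positions `V0`, player 1's positions `V1`,
and the edge set `E`. -/
structure ConnGame (V : Type u) where
  V0 : Set V
  V1 : Set V
  E : Set (V × V)

namespace ConnGame

/-- The vertex set `V = V0 ∪ V1`. -/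
def verts (G : ConnGame V) : Set V := G.V0 ∪ G.V1

/-- The sub-game of `G` played on the vertex set `X` (edges restricted to `X`). -/
def restrict (G : ConnGame V) (X : Set V) : ConnGame V :=
  ⟨G.V0 ∩ X, G.V1 ∩ X, {e | e ∈ G.E ∧ e.1 ∈ X ∧ e.2 ∈ X}⟩

end ConnGame

/-- Reachability by a directed path in the digraph with edge set `E`. -/
def Reach (E : Set (V × V)) : V → V → Prop :=
  Relation.ReflTransGen fun x y => (x, y) ∈ E

/-- Reachability by a directed path staying inside `X`. -/
def ReachWithin (E : Set (V × V)) (X : Set V) : V → V → Prop :=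
  Relation.ReflTransGen fun x y => (x, y) ∈ E ∧ x ∈ X ∧ y ∈ X

/-- The set of strongly connected components of the digraph with vertex set `W`
and edge set `E`. -/
def SCCs (W : Set V) (E : Set (V × V)) : Set (Set V) :=
  {S | ∃ v ∈ W, S = {u | u ∈ W ∧ Reach E v u ∧ Reach E u v}}

/-- The digraph with vertex set `W` and edge set `E` is strongly connected. -/
def StronglyConnected (W : Set V) (E : Set (V × V)) : Prop :=
  ∀ a ∈ W, ∀ b ∈ W, Reach E a b

/-- `E⁻¹(S)`: the set of predecessors of `S`. -/
def preds (E : Set (V × V)) (S : Set V) : Set V := {u | ∃ s ∈ S, (u, s) ∈ E}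

/-- `Force(U, S) = {v ∈ (E⁻¹(S) \ S) ∩ U : E(v) ⊆ S}`. -/
def Force (E : Set (V × V)) (U S : Set V) : Set V :=
  {v | v ∈ (preds E S \ S) ∩ U ∧ ∀ u, (v, u) ∈ E → u ∈ S}

/-- `X` is a forced trap (FT) w.r.t. player 1's positions `V1` and edge set `E`:
either `X` is a singleton, or `|X| > 1`, `E(X ∩ V1) ⊆ X` and any two vertices of `X`
are strongly connected within `X`. -/
def IsFT (V1 : Set V) (E : Set (V × V)) (X : Set V) : Prop :=
  (∃ v, X = {v}) ∨
    (X.Nontrivial ∧ (∀ v ∈ X ∩ V1, ∀ u, (v, u) ∈ E → u ∈ X) ∧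
      ∀ a ∈ X, ∀ b ∈ X, ReachWithin E X a b)

/-- The derivative sequence of `G`: `deriv G k = (E_k, U_k, F_k)`. -/
def deriv (G : ConnGame V) : ℕ → Set (V × V) × Set V × Set V
  | 0 => ({e | e ∈ G.E ∧ e.1 ∈ G.V0}, G.V1, ∅)
  | k + 1 =>
    let p := deriv G k
    let F : Set V := ⋃ S ∈ SCCs G.verts p.1, Force G.E p.2.1 S
    (p.1 ∪ {e | e ∈ G.E ∧ e.1 ∈ F}, p.2.1 \ F, F)

/-- The edge set `E_k` of the `k`-th derivative `G_k`. -/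
def Ek (G : ConnGame V) (k : ℕ) : Set (V × V) := (deriv G k).1

/-- The set `U_k`. -/
def Uk (G : ConnGame V) (k : ℕ) : Set V := (deriv G k).2.1

/-- The set `F_k`. -/
def Fk (G : ConnGame V) (k : ℕ) : Set V := (deriv G k).2.2

/-- The stabilization point: the minimal `k > 0` with `F_k = ∅`. -/
noncomputable def stab (G : ConnGame V) : ℕ := sInf {k | 0 < k ∧ Fk G k = ∅}

/-- Finite plays (histories) consistent with the player-0 strategy `s`, starting
at `v0`: at a player-0 position the strategy's (legal) move is played, at a
player-1 position any legal move may be played. -/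
inductive Hist (G : ConnGame V) (s : List V → V) (v0 : V) : List V → Prop
  | base : Hist G s v0 [v0]
  | move0 (h : List V) (v : V) (hh : Hist G s v0 (h ++ [v])) (hv : v ∈ G.V0)
      (he : (v, s (h ++ [v])) ∈ G.E) : Hist G s v0 ((h ++ [v]) ++ [s (h ++ [v])])
  | move1 (h : List V) (v u : V) (hh : Hist G s v0 (h ++ [v])) (hv : v ∈ G.V1)
      (he : (v, u) ∈ G.E) : Hist G s v0 ((h ++ [v]) ++ [u])

/-- The prefix `ρ 0, …, ρ n` of an infinite sequence. -/
def prefixUpTo (ρ : ℕ → V) (n : ℕ) : List V := List.ofFn fun i : Fin (n + 1) => ρ i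

/-- `ρ` is an infinite play consistent with strategy `s` from `v0`. -/
def InfPlay (G : ConnGame V) (s : List V → V) (v0 : V) (ρ : ℕ → V) : Prop :=
  ∀ n, Hist G s v0 (prefixUpTo ρ n)

/-- The set of vertices visited infinitely often by `ρ`. -/
def InfSet (ρ : ℕ → V) : Set V := {v | ∀ N, ∃ n, N ≤ n ∧ ρ n = v}

/-- `s` is a winning strategy for player 0 from `v0` in the connectivity game on `G`:
along every consistent history player 0's moves are legal and the play is never stuck
(so all maximal consistent plays are infinite), and every infinite consistent play
visits every vertex of `G` infinitely often. -/
def WinsConnFrom (G : ConnGame V) (s : List V → V) (v0 : V) : Prop :=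
  (∀ h v, Hist G s v0 (h ++ [v]) →
      (v ∈ G.V0 → (v, s (h ++ [v])) ∈ G.E) ∧ (v ∈ G.V1 → ∃ u, (v, u) ∈ G.E)) ∧
    ∀ ρ : ℕ → V, InfPlay G s v0 ρ → InfSet ρ = G.verts

/-- `G` is forced-connected: player 0 wins the connectivity game from every vertex. -/
def ForcedConnected (G : ConnGame V) : Prop :=
  ∀ v ∈ G.verts, ∃ s : List V → V, WinsConnFrom G s v

/-- The simplified derivative sequence `G'_k`, where the choice function `c`
selects one outgoing edge per forced vertex: `deriv' G c k = (E'_k, U_k, F_k)`. -/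
def deriv' (G : ConnGame V) (c : V → V) : ℕ → Set (V × V) × Set V × Set V
  | 0 => ({e | e ∈ G.E ∧ e.1 ∈ G.V0}, G.V1, ∅)
  | k + 1 =>
    let p := deriv' G c k
    let F : Set V := ⋃ S ∈ SCCs G.verts p.1, Force G.E p.2.1 S
    (p.1 ∪ {e | ∃ f ∈ F, e = (f, c f)}, p.2.1 \ F, F)

/-- The edge set `E'_k` of the simplified derivative `G'_k`. -/
def Ek' (G : ConnGame V) (c : V → V) (k : ℕ) : Set (V × V) := (deriv' G c k).1

/-- The set `F_k` of the simplified derivative sequence. -/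
def Fk' (G : ConnGame V) (c : V → V) (k : ℕ) : Set V := (deriv' G c k).2.2

/-- The stabilization point of the simplified derivative sequence. -/
noncomputable def stab' (G : ConnGame V) (c : V → V) : ℕ :=
  sInf {k | 0 < k ∧ Fk' G c k = ∅}

/-- The reduced derivative sequence `G''_k` on the vertex set `V0`:
`deriv'' G c k = (E''_k, U''_k, F''_k)`. -/
def deriv'' (G : ConnGame V) (c : V → V) : ℕ → Set (V × V) × Set V × Set V
  | 0 => (∅, G.V1, ∅)
  | k + 1 =>
    let p := deriv'' G c k
    let F : Set V := ⋃ S ∈ SCCs G.V0 p.1, Force G.E p.2.1 S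
    (p.1 ∪ {e | ∃ f ∈ F, (e.1, f) ∈ G.E ∧ e.2 = c f}, p.2.1 \ F, F)

/-- The edge set `E''_k` of the reduced derivative `G''_k`. -/
def Ek'' (G : ConnGame V) (c : V → V) (k : ℕ) : Set (V × V) := (deriv'' G c k).1

/-- The set `F''_k` of the reduced derivative sequence. -/
def Fk'' (G : ConnGame V) (c : V → V) (k : ℕ) : Set V := (deriv'' G c k).2.2

/-- The stabilization point of the reduced derivative sequence. -/
noncomputable def stab'' (G : ConnGame V) (c : V → V) : ℕ :=
  sInf {k | 0 < k ∧ Fk'' G c k = ∅}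

/-- The derivation forest: `forest G k = (N_k, Son_k)`. -/
def forest (G : ConnGame V) : ℕ → Set (Set V) × Set (Set V × Set V)
  | 0 => ({S | ∃ v ∈ G.verts, S = {v}}, ∅)
  | k + 1 =>
    let p := forest G k
    let C : Set (Set V) := SCCs G.verts (Ek G (k + 1)) \ p.1
    (p.1 ∪ C, p.2 ∪ {q | q.1 ∈ C ∧ q.2 ∈ SCCs G.verts (Ek G k) ∧ q.2 ⊂ q.1})

/-- The node set `N` of the derivation forest `Γ(G) = Γ_s(G)`. -/
noncomputable def forestN (G : ConnGame V) : Set (Set V) := (forest G (stab G)).1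

/-- The son relation `Son` of the derivation forest `Γ(G) = Γ_s(G)`. -/
noncomputable def forestSon (G : ConnGame V) : Set (Set V × Set V) :=
  (forest G (stab G)).2

/-! A node `X` of the forest with `|X| > 1` is a strongly connected component of some derivative
`G_K`. By induction on `m ≤ K`, from any vertex `a` of a component `S ⊆ X` of `G_m` player 0 can
force, without leaving `X`, a visit to any other vertex `b` of `S`: follow a `G_m`-path from `a`
to `b`. An edge of the path leaving a player-0 vertex is a move of player 0; an edge leaving a
player-1 vertex exists only because all moves from that vertex lead into one component of an
earlier `G_j`, which lies inside `X`, and by induction player 0 can force the return to the path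
from anywhere in that component. Player 0 then wins `G(X)` by visiting the vertices of `X` in
cyclic order, chasing each target with an attractor strategy. -/

section Plays

variable {G : ConnGame V} {s : List V → V} {v₀ : V}

lemma Hist.step {h : List V} {w u : V} (hh : Hist G s v₀ (h ++ [w, u])) :
    (w, u) ∈ G.E ∧ (w ∈ G.V0 ∧ u = s (h ++ [w]) ∨ w ∈ G.V1) := by
  generalize hL : h ++ [w, u] = L at hh
  cases hh with
  | base => simpa using congrArg List.length hL
  | move0 h' v _ hv he =>
    have hL' : h ++ [w, u] = h' ++ [v, s (h' ++ [v])] := by simpa using hL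
    obtain ⟨rfl, hwu⟩ := List.append_inj' hL' rfl
    obtain ⟨rfl, rfl⟩ : w = v ∧ u = _ := by simpa using hwu
    exact ⟨he, .inl ⟨hv, rfl⟩⟩
  | move1 h' v x _ hv he =>
    have hL' : h ++ [w, u] = h' ++ [v, x] := by simpa using hL
    obtain ⟨rfl, hwu⟩ := List.append_inj' hL' rfl
    obtain ⟨rfl, rfl⟩ : w = v ∧ u = _ := by simpa using hwu
    exact ⟨he, .inr hv⟩

lemma Hist.subset {W : Set V} (hv₀ : v₀ ∈ W) (hE : ∀ e ∈ G.E, e.2 ∈ W) {L : List V}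
    (h : Hist G s v₀ L) : ∀ w ∈ L, w ∈ W := by
  induction h with
  | base => simpa using hv₀
  | move0 _ _ _ _ he ih | move1 _ _ _ _ _ he ih =>
    intro w hw
    rcases List.mem_append.mp hw with hw | hw
    · exact ih w hw
    · rw [List.mem_singleton.mp hw]
      exact hE _ he

lemma prefixUpTo_eq (ρ : ℕ → V) (n : ℕ) :
    prefixUpTo ρ n = List.ofFn (fun i : Fin n => ρ i) ++ [ρ n] := by
  rw [prefixUpTo, List.ofFn_succ', List.concat_eq_append]
  rfl

lemma prefixUpTo_succ (ρ : ℕ → V) (n : ℕ) :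
    prefixUpTo ρ (n + 1) = prefixUpTo ρ n ++ [ρ (n + 1)] :=
  prefixUpTo_eq ρ (n + 1)

lemma prefixUpTo_getLastD (ρ : ℕ → V) (n : ℕ) (c : V) : (prefixUpTo ρ n).getLastD c = ρ n := by
  rw [prefixUpTo_eq, List.getLastD_concat]

variable {ρ : ℕ → V}

lemma InfPlay.step (hρ : InfPlay G s v₀ ρ) (n : ℕ) :
    (ρ n, ρ (n + 1)) ∈ G.E ∧
      (ρ n ∈ G.V0 ∧ ρ (n + 1) = s (prefixUpTo ρ n) ∨ ρ n ∈ G.V1) := by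
  have h := hρ (n + 1)
  rw [prefixUpTo_succ, prefixUpTo_eq, List.append_assoc] at h
  rw [prefixUpTo_eq]
  exact h.step

lemma InfPlay.mem {W : Set V} (hρ : InfPlay G s v₀ ρ) (hv₀ : v₀ ∈ W)
    (hE : ∀ e ∈ G.E, e.2 ∈ W) (n : ℕ) : ρ n ∈ W :=
  (hρ n).subset hv₀ hE _ (by simp [prefixUpTo_eq])

end Plays

/-- `Attr H T n v`: from `v`, player 0 can force a visit to `T` within `n` moves. -/
inductive Attr (H : ConnGame V) (T : Set V) : ℕ → V → Prop
  | mem {n : ℕ} {v : V} : v ∈ T → Attr H T n v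
  | move0 {n : ℕ} {v u : V} : v ∈ H.V0 → (v, u) ∈ H.E → Attr H T n u → Attr H T (n + 1) v
  | move1 {n : ℕ} {v : V} : v ∈ H.V1 → (∃ u, (v, u) ∈ H.E) →
      (∀ u, (v, u) ∈ H.E → Attr H T n u) → Attr H T (n + 1) v

section Attractor

variable {H : ConnGame V} {T T' : Set V} {n n' : ℕ} {v u : V}

lemma Attr.mono (h : Attr H T n v) (hn : n ≤ n') : Attr H T n' v := by
  induction h generalizing n' with
  | mem hv => exact .mem hv
  | move0 hv he _ ih =>
    obtain ⟨n', rfl⟩ := Nat.exists_eq_add_of_lt hn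
    exact .move0 hv he (ih (by omega))
  | move1 hv hsucc _ ih =>
    obtain ⟨n', rfl⟩ := Nat.exists_eq_add_of_lt hn
    exact .move1 hv hsucc fun u hu => ih u hu (by omega)

lemma Attr.trans (h : Attr H T n v) (hT : ∀ t ∈ T, Attr H T' n' t) : Attr H T' (n' + n) v := by
  induction h with
  | mem hv => exact (hT _ hv).mono (Nat.le_add_right _ _)
  | move0 hv he _ ih => exact .move0 hv he ih
  | move1 hv hsucc _ ih => exact .move1 hv hsucc ih

lemma exists_attr_of_mem_V1 [Finite V] (hv : v ∈ H.V1) (hsucc : ∃ u, (v, u) ∈ H.E)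
    (h : ∀ u, (v, u) ∈ H.E → ∃ n, Attr H T n u) : ∃ n, Attr H T n v := by
  have := Fintype.ofFinite V
  choose! N hN using h
  exact ⟨Finset.univ.sup N + 1, .move1 hv hsucc fun u hu =>
    (hN u hu).mono (Finset.le_sup (Finset.mem_univ u))⟩

noncomputable def attrRank (H : ConnGame V) (T : Set V) (v : V) : ℕ := sInf {n | Attr H T n v}

lemma attrRank_le (h : Attr H T n v) : attrRank H T v ≤ n := Nat.sInf_le h

lemma Attr.attrRank_spec (h : Attr H T n v) : Attr H T (attrRank H T v) v :=
  Nat.sInf_mem (s := {n | Attr H T n v}) ⟨n, h⟩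

lemma Attr.exists_attrRank_lt (h : Attr H T n v) (hv : v ∉ T) :
    ∃ u, (v, u) ∈ H.E ∧ attrRank H T u < attrRank H T v := by
  have h' := h.attrRank_spec
  generalize attrRank H T v = r at h' ⊢
  cases h' with
  | mem hvT => exact absurd hvT hv
  | move0 _ he hu => exact ⟨_, he, Nat.lt_succ_of_le (attrRank_le hu)⟩
  | move1 _ hsucc hall =>
    obtain ⟨u, he⟩ := hsucc
    exact ⟨u, he, Nat.lt_succ_of_le (attrRank_le (hall u he))⟩

lemma Attr.attrRank_lt_of_not_mem_V0 (h : Attr H T n v) (hv : v ∉ T) (hv0 : v ∉ H.V0)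
    (he : (v, u) ∈ H.E) : attrRank H T u < attrRank H T v := by
  have h' := h.attrRank_spec
  generalize attrRank H T v = r at h' ⊢
  cases h' with
  | mem hvT => exact absurd hvT hv
  | move0 hv0' => exact absurd hv0' hv0
  | move1 _ _ hall => exact Nat.lt_succ_of_le (attrRank_le (hall u he))

open scoped Classical in
noncomputable def attrMove (H : ConnGame V) (T : Set V) (v : V) : V :=
  if h : ∃ u, (v, u) ∈ H.E ∧ attrRank H T u < attrRank H T v then h.choose else v

lemma Attr.attrMove_spec (h : Attr H T n v) (hv : v ∉ T) :
    (v, attrMove H T v) ∈ H.E ∧ attrRank H T (attrMove H T v) < attrRank H T v := by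
  have hex := h.exists_attrRank_lt hv
  rw [attrMove, dif_pos hex]
  exact hex.choose_spec

end Attractor

lemma exists_cyclic_sequence {W : Set V} (hfin : W.Finite) (hnt : W.Nontrivial) :
    ∃ τ : ℕ → V, (∀ i, τ i ∈ W) ∧ (∀ i, τ (i + 1) ≠ τ i) ∧
      ∀ x ∈ W, ∀ j₀, ∃ j, j₀ ≤ j ∧ τ j = x := by
  have := hfin.fintype
  have hm : 1 < Fintype.card W := Fintype.one_lt_card_iff_nontrivial.mpr hnt.coe_sort
  let e := (Fintype.equivFin W).symm
  refine ⟨fun i => e ⟨i % Fintype.card W, Nat.mod_lt _ (by omega)⟩, fun i => (e _).2,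
    fun i h => ?_, fun x hx j₀ => ?_⟩
  · have hmod : i + 1 ≡ i + 0 [MOD Fintype.card W] :=
      congrArg Fin.val (e.injective (Subtype.ext h))
    have h10 := Nat.ModEq.add_left_cancel' i hmod
    rw [Nat.ModEq, Nat.mod_eq_of_lt hm, Nat.zero_mod] at h10
    exact one_ne_zero h10
  · obtain ⟨k, hk⟩ := e.surjective ⟨x, hx⟩
    refine ⟨k + Fintype.card W * j₀, by nlinarith, ?_⟩
    have hk' : (⟨(k + Fintype.card W * j₀) % Fintype.card W, Nat.mod_lt _ (by omega)⟩ :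
        Fin (Fintype.card W)) = k :=
      Fin.ext ((Nat.add_mul_mod_self_left _ _ _).trans (Nat.mod_eq_of_lt k.2))
    simp only [hk', hk]

lemma exists_increment {I μ : ℕ → ℕ} (hI : ∀ n, I (n + 1) = I n ∨ I (n + 1) = I n + 1)
    (hμ : ∀ n, I (n + 1) = I n → μ (n + 1) < μ n) (n : ℕ) :
    ∃ m, n ≤ m ∧ I m = I n ∧ I (m + 1) = I n + 1 := by
  induction hr : μ n using Nat.strong_induction_on generalizing n with
  | _ r ih =>
    rcases hI n with hn | hn
    · obtain ⟨m, hm, hIm, hIm'⟩ := ih _ (hr ▸ hμ n hn) (n + 1) rfl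
      exact ⟨m, by omega, hIm.trans hn, hn ▸ hIm'⟩
    · exact ⟨n, le_rfl, rfl, hn⟩

lemma exists_increment_at {I μ : ℕ → ℕ} (hI : ∀ n, I (n + 1) = I n ∨ I (n + 1) = I n + 1)
    (hμ : ∀ n, I (n + 1) = I n → μ (n + 1) < μ n) {N j : ℕ} (hj : I N ≤ j) :
    ∃ n, N ≤ n ∧ I n = j ∧ I (n + 1) = j + 1 := by
  obtain ⟨d, hd⟩ := Nat.exists_eq_add_of_le hj
  induction d generalizing N with
  | zero =>
    obtain ⟨n, hn, h⟩ := exists_increment hI hμ N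
    exact ⟨n, hn, by omega⟩
  | succ d ih =>
    obtain ⟨m, hm, -, hIm⟩ := exists_increment hI hμ N
    obtain ⟨n, hn, h⟩ := ih (N := m + 1) (by omega) (by omega)
    exact ⟨n, by omega, h⟩

open scoped Classical in
noncomputable def hitStep (τ : ℕ → V) (i : ℕ) (w : V) : ℕ := if w = τ i then i + 1 else i

/-- The index of the current target after the history `h`, when the targets `τ 0, τ 1, …` are
visited in turn. -/
noncomputable def hitCount (τ : ℕ → V) (h : List V) : ℕ := h.foldl (hitStep τ) 0

section CycleStrategy

variable {τ : ℕ → V}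

lemma hitStep_eq_or (i : ℕ) (w : V) :
    hitStep τ i w = i ∨ hitStep τ i w = i + 1 ∧ w = τ i := by
  unfold hitStep
  split_ifs with h
  exacts [.inr ⟨rfl, h⟩, .inl rfl]

lemma ne_hitStep (hτ : ∀ i, τ (i + 1) ≠ τ i) (i : ℕ) (w : V) : w ≠ τ (hitStep τ i w) := by
  unfold hitStep
  split_ifs with h
  exacts [h ▸ (hτ i).symm, h]

lemma hitCount_concat (h : List V) (w : V) :
    hitCount τ (h ++ [w]) = hitStep τ (hitCount τ h) w :=
  List.foldl_concat _ _ _ _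

noncomputable def cycleStrategy (H : ConnGame V) (τ : ℕ → V) (h : List V) : V :=
  attrMove H {τ (hitCount τ h)} (h.getLastD (τ 0))

variable {H : ConnGame V} {v₀ : V}

lemma cycleStrategy_legal (hτW : ∀ i, τ i ∈ H.verts) (hτ : ∀ i, τ (i + 1) ≠ τ i)
    (hE : ∀ e ∈ H.E, e.2 ∈ H.verts) (hattr : ∀ t ∈ H.verts, ∀ v ∈ H.verts, ∃ n, Attr H {t} n v)
    (hv₀ : v₀ ∈ H.verts) {h : List V} {w : V} (hh : Hist H (cycleStrategy H τ) v₀ (h ++ [w])) :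
    (w ∈ H.V0 → (w, cycleStrategy H τ (h ++ [w])) ∈ H.E) ∧ (w ∈ H.V1 → ∃ u, (w, u) ∈ H.E) := by
  have hw : w ∉ ({τ (hitCount τ (h ++ [w]))} : Set V) := by
    rw [hitCount_concat]
    exact ne_hitStep hτ _ w
  obtain ⟨n, hn⟩ := hattr _ (hτW _) w (hh.subset hv₀ hE w (by simp))
  have hmove : (w, cycleStrategy H τ (h ++ [w])) ∈ H.E := by
    rw [cycleStrategy, List.getLastD_concat]
    exact (hn.attrMove_spec hw).1
  exact ⟨fun _ => hmove, fun _ => ⟨_, hmove⟩⟩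

lemma infSet_of_cycleStrategy (hdisj : Disjoint H.V0 H.V1) (hτW : ∀ i, τ i ∈ H.verts)
    (hτ : ∀ i, τ (i + 1) ≠ τ i) (hτ_inf : ∀ x ∈ H.verts, ∀ j₀, ∃ j, j₀ ≤ j ∧ τ j = x)
    (hE : ∀ e ∈ H.E, e.2 ∈ H.verts) (hattr : ∀ t ∈ H.verts, ∀ v ∈ H.verts, ∃ n, Attr H {t} n v)
    (hv₀ : v₀ ∈ H.verts) {ρ : ℕ → V} (hρ : InfPlay H (cycleStrategy H τ) v₀ ρ) :
    InfSet ρ = H.verts := by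
  set I : ℕ → ℕ := fun n => hitCount τ (prefixUpTo ρ n) with hI
  have hmem : ∀ n, ρ n ∈ H.verts := hρ.mem hv₀ hE
  have hI_succ (n : ℕ) : I (n + 1) = hitStep τ (I n) (ρ (n + 1)) := by
    simp only [hI, prefixUpTo_succ, hitCount_concat]
  have hnot_target (n : ℕ) : ρ n ∉ ({τ (I n)} : Set V) := by
    simp only [hI]
    rw [prefixUpTo_eq, hitCount_concat]
    exact ne_hitStep hτ _ _
  have hstep (n : ℕ) : I (n + 1) = I n ∨ I (n + 1) = I n + 1 :=
    (hitStep_eq_or (I n) (ρ (n + 1))).imp (hI_succ n ▸ ·) (hI_succ n ▸ ·.1)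
  have hrank (n : ℕ) (hn : I (n + 1) = I n) :
      attrRank H {τ (I (n + 1))} (ρ (n + 1)) < attrRank H {τ (I n)} (ρ n) := by
    rw [hn]
    obtain ⟨k, hk⟩ := hattr _ (hτW (I n)) _ (hmem n)
    obtain ⟨hedge, ⟨-, hmove⟩ | hv1⟩ := hρ.step n
    · rw [hmove, cycleStrategy, prefixUpTo_getLastD]
      exact (hk.attrMove_spec (hnot_target n)).2
    · exact hk.attrRank_lt_of_not_mem_V0 (hnot_target n) (hdisj.notMem_of_mem_right hv1) hedge
  refine Set.Subset.antisymm (fun x hx => ?_) fun x hx N => ?_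
  · obtain ⟨n, -, rfl⟩ := hx 0
    exact hmem n
  · obtain ⟨j, hj, rfl⟩ := hτ_inf x hx (I N)
    obtain ⟨n, hn, hIn, hIn'⟩ :=
      exists_increment_at (μ := fun n => attrRank H {τ (I n)} (ρ n)) hstep hrank hj
    refine ⟨n + 1, by omega, ?_⟩
    rcases hitStep_eq_or (τ := τ) (I n) (ρ (n + 1)) with h | ⟨-, h⟩
    · exact absurd (hI_succ n) (by omega)
    · rw [h, hIn]

end CycleStrategy

theorem forcedConnected_of_attr [Finite V] (H : ConnGame V) (hdisj : Disjoint H.V0 H.V1)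
    (hE : ∀ e ∈ H.E, e.2 ∈ H.verts) (hattr : ∀ t ∈ H.verts, ∀ v ∈ H.verts, ∃ n, Attr H {t} n v)
    (hnt : H.verts.Nontrivial) : ForcedConnected H := by
  obtain ⟨τ, hτW, hτ, hτ_inf⟩ := exists_cyclic_sequence (Set.toFinite _) hnt
  exact fun v hv => ⟨cycleStrategy H τ, fun _ _ hh => cycleStrategy_legal hτW hτ hE hattr hv hh,
    fun _ hρ => infSet_of_cycleStrategy hdisj hτW hτ hτ_inf hE hattr hv hρ⟩

section Components

variable {W S T : Set V} {E E' : Set (V × V)}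

lemma subset_of_mem_SCCs (hS : S ∈ SCCs W E) : S ⊆ W := by
  obtain ⟨c, -, rfl⟩ := hS
  exact fun _ hu => hu.1

lemma subset_of_mem_SCCs_of_mono (hE : E ⊆ E') (hS : S ∈ SCCs W E) (hT : T ∈ SCCs W E')
    (hST : (S ∩ T).Nonempty) : S ⊆ T := by
  have reach_mono {a b : V} : Reach E a b → Reach E' a b :=
    Relation.ReflTransGen.mono (fun _ _ h => hE h) _ _
  obtain ⟨c, -, rfl⟩ := hS
  obtain ⟨d, -, rfl⟩ := hT
  obtain ⟨w, hwS, hwT⟩ := hST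
  exact fun u hu => ⟨hu.1, hwT.2.1.trans (reach_mono (hwS.2.2.trans hu.2.1)),
    (reach_mono (hu.2.2.trans hwS.2.1)).trans hwT.2.2⟩

lemma reachWithin_of_mem_SCCs (hE : ∀ e ∈ E, e.2 ∈ W) (hS : S ∈ SCCs W E) :
    ∀ a ∈ S, ∀ b ∈ S, ReachWithin E S a b := by
  obtain ⟨c, -, rfl⟩ := hS
  intro a ha b hb
  have hab : Reach E a b := ha.2.2.trans hb.2.1
  revert ha
  induction hab using Relation.ReflTransGen.head_induction_on with
  | refl => exact fun _ => .refl
  | head hxz hzb ih =>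
    intro hx
    have hz : _ ∈ {u | u ∈ W ∧ Reach E c u ∧ Reach E u c} :=
      ⟨hE _ hxz, hx.2.1.tail hxz, hzb.trans hb.2.2⟩
    exact .head ⟨hxz, hx, hz⟩ (ih hz)

end Components

section Derivatives

variable {G : ConnGame V}

lemma Ek_subset_E (G : ConnGame V) (k : ℕ) : Ek G k ⊆ G.E := by
  induction k with
  | zero => exact fun e he => he.1
  | succ k ih => exact Set.union_subset ih fun e he => he.1

lemma Ek_mono (G : ConnGame V) : Monotone (Ek G) :=
  monotone_nat_of_le_succ fun _ => Set.subset_union_left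

lemma Uk_subset_V1 (G : ConnGame V) (k : ℕ) : Uk G k ⊆ G.V1 := by
  induction k with
  | zero => exact subset_rfl
  | succ k ih => exact Set.sdiff_subset.trans ih

lemma mem_V0_or_forced_of_mem_Ek {k : ℕ} {x y : V} (h : (x, y) ∈ Ek G k) :
    x ∈ G.V0 ∨ x ∈ G.V1 ∧ ∃ j < k, ∃ S ∈ SCCs G.verts (Ek G j), ∀ u, (x, u) ∈ G.E → u ∈ S := by
  induction k with
  | zero => exact .inl h.2
  | succ k ih =>
    rcases h with h | h
    · exact (ih h).imp_right fun ⟨hx, j, hj, hS⟩ => ⟨hx, j, by omega, hS⟩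
    · obtain ⟨S, hS, hF⟩ := Set.mem_iUnion₂.mp h.2
      exact .inr ⟨Uk_subset_V1 G k hF.1.2, k, by omega, S, hS, hF.2⟩

lemma mem_forest_fst {k : ℕ} {Y : Set V} (hY : Y ∈ (forest G k).1) :
    (∃ v, Y = {v}) ∨ ∃ j, Y ∈ SCCs G.verts (Ek G j) := by
  induction k with
  | zero =>
    obtain ⟨v, -, rfl⟩ := hY
    exact .inl ⟨v, rfl⟩
  | succ k ih =>
    rcases hY with hY | hY
    exacts [ih hY, .inr ⟨k + 1, hY.1⟩]

end Derivatives

lemma ConnGame.restrict_verts (G : ConnGame V) (X : Set V) :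
    (G.restrict X).verts = G.verts ∩ X :=
  (Set.union_inter_distrib_right _ _ _).symm

lemma exists_attr_restrict [Finite V] {G : ConnGame V}
    (hEsub : G.E ⊆ (G.V0 ×ˢ G.V1) ∪ (G.V1 ×ˢ G.V0)) {X : Set V} {K : ℕ}
    (hX : X ∈ SCCs G.verts (Ek G K)) (m : ℕ) (hmK : m ≤ K) {S : Set V}
    (hS : S ∈ SCCs G.verts (Ek G m)) (hSX : S ⊆ X) :
    ∀ a ∈ S, ∀ b ∈ S, ∃ n, Attr (G.restrict X) {b} n a := by
  induction m using Nat.strong_induction_on generalizing S with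
  | _ m ih =>
  have hE : ∀ e ∈ Ek G m, e.2 ∈ G.verts := fun e he => by
    rcases hEsub (Ek_subset_E G m he) with h | h
    exacts [Or.inr h.2, Or.inl h.2]
  intro a ha b hb
  have hab := reachWithin_of_mem_SCCs hE hS a ha b hb
  clear ha
  induction hab using Relation.ReflTransGen.head_induction_on with
  | refl => exact ⟨0, .mem rfl⟩
  | @head a c hac _ ihc =>
    obtain ⟨hac, haS, hcS⟩ := hac
    obtain ⟨k, hk⟩ := ihc
    have hac' : (a, c) ∈ (G.restrict X).E := ⟨Ek_subset_E G m hac, hSX haS, hSX hcS⟩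
    rcases mem_V0_or_forced_of_mem_Ek hac with ha0 | ⟨ha1, j, hjm, Sj, hSj, hsucc⟩
    · exact ⟨k + 1, .move0 ⟨ha0, hSX haS⟩ hac' hk⟩
    have hSjX : Sj ⊆ X := subset_of_mem_SCCs_of_mono (Ek_mono G (by omega)) hSj hX
      ⟨c, hsucc c hac'.1, hSX hcS⟩
    obtain ⟨k', hk'⟩ := exists_attr_of_mem_V1 (H := G.restrict X) ⟨ha1, hSX haS⟩ ⟨c, hac'⟩
      fun u hu => ih j hjm (by omega) hSj hSjX u (hsucc u hu.1) c (hsucc c hac'.1)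
    exact ⟨k + k', hk'.trans fun t ht => by rwa [Set.mem_singleton_iff.mp ht]⟩

/-- For every node `X` of the derivation forest `Γ(G)` with `|X| > 1`,
the connectivity sub-game of `G` played on `X` is forced-connected. -/
theorem stmt4 [Fintype V] (G : ConnGame V)
    (hdisj : Disjoint G.V0 G.V1)
    (hEsub : G.E ⊆ (G.V0 ×ˢ G.V1) ∪ (G.V1 ×ˢ G.V0)) :
    ∀ X ∈ forestN G, X.Nontrivial → ForcedConnected (G.restrict X) := by
  intro X hXN hnt
  obtain ⟨w, rfl⟩ | ⟨K, hXK⟩ := mem_forest_fst hXN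
  · exact absurd hnt Set.not_nontrivial_singleton
  have hverts : (G.restrict X).verts = X := by
    rw [ConnGame.restrict_verts, Set.inter_eq_right.mpr (subset_of_mem_SCCs hXK)]
  refine forcedConnected_of_attr _ (hdisj.mono Set.inter_subset_left Set.inter_subset_left)
    (fun e he => by rw [hverts]; exact he.2.2) (fun t ht v hv => ?_) (by rwa [hverts])
  rw [hverts] at ht hv
  exact exists_attr_restrict hEsub hXK K le_rfl hXK subset_rfl v hv t ht

end Games
end

section
/- Let G=(V0,V1,E) be a connectivity game and (G_k)_{k≥0} its derivative sequence. For every player-1 vertex v∈V1 and every k>0: the outgoing edges of v belong to E_k\E_{k-1} if and only if the out-degree of v in G_{k-1} is 0 and all outgoing edges of v in E point into the same strongly connected component of G_{k-1}. -/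
namespace Games

universe u

variable {V : Type u}

lemma Ek_sub_E (G : ConnGame V) : ∀ k, Ek G k ⊆ G.E := by
  intro k
  induction k with
  | zero => intro e he; exact he.1
  | succ n ih =>
    intro e he
    simp only [Ek, deriv] at he
    rcases he with h | h
    · exact ih h
    · exact h.1

lemma exists_edge_of_not_Uk (G : ConnGame V) :
    ∀ m, ∀ v, v ∈ G.V1 → v ∉ Uk G m → ∃ u, (v, u) ∈ Ek G m := by
  intro m
  induction m with
  | zero => intro v hv h; exact absurd hv h
  | succ n ih =>
    intro v hv h
    simp only [Uk, deriv, Set.mem_diff, not_and, not_not] at h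
    by_cases hU : v ∈ Uk G n
    · have hF := h hU
      have hF2 := hF
      simp only [Set.mem_iUnion] at hF2
      obtain ⟨S, hS, ⟨⟨⟨s, hsS, hvs⟩, _⟩, _⟩, _⟩ := hF2
      simp only [Ek, deriv]
      exact ⟨s, Or.inr ⟨hvs, hF⟩⟩
    · obtain ⟨u, hu⟩ := ih v hv hU
      exact ⟨u, Or.inl hu⟩

/-- For every player-1 vertex `v` and every `k > 0`: the outgoing
edges of `v` belong to `E_k \ E_{k-1}` iff the out-degree of `v` in `G_{k-1}` is `0`
and all outgoing edges of `v` in `E` point into the same strongly connected component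
of `G_{k-1}`. -/
theorem stmt18 [Fintype V] (G : ConnGame V)
    (hdisj : Disjoint G.V0 G.V1)
    (hEsub : G.E ⊆ (G.V0 ×ˢ G.V1) ∪ (G.V1 ×ˢ G.V0)) :
    ∀ v ∈ G.V1, ∀ k : ℕ, 0 < k →
      ((∀ u, (v, u) ∈ G.E → ((v, u) ∈ Ek G k ∧ (v, u) ∉ Ek G (k - 1))) ↔
        ((∀ u, (v, u) ∉ Ek G (k - 1)) ∧
          ∃ S ∈ SCCs G.verts (Ek G (k - 1)), ∀ u, (v, u) ∈ G.E → u ∈ S)) := by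
  intro v hv k hk
  obtain ⟨m, rfl⟩ : ∃ m, k = m + 1 := ⟨k - 1, (Nat.succ_pred_eq_of_pos hk).symm⟩
  simp only [Nat.add_sub_cancel]
  have hvV : v ∈ G.verts := Or.inr hv
  have hnoloop : (v, v) ∉ G.E := by
    intro hvv
    rcases hEsub hvv with h | h
    · exact hdisj.le_bot ⟨h.1, hv⟩
    · exact hdisj.le_bot ⟨h.2, hv⟩
  constructor
  · intro hL
    have hnone : ∀ u, (v, u) ∉ Ek G m := fun u hu =>
      (hL u (Ek_sub_E G m hu)).2 hu
    refine ⟨hnone, ?_⟩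
    by_cases hE : ∃ u, (v, u) ∈ G.E
    · obtain ⟨u0, hu0⟩ := hE
      have h1 := (hL u0 hu0).1
      simp only [Ek, deriv] at h1
      rcases h1 with h1 | h1
      · exact absurd h1 (hnone u0)
      · have hF := h1.2
        simp only [Set.mem_iUnion] at hF
        obtain ⟨S, hS, hforce⟩ := hF
        exact ⟨S, hS, hforce.2⟩
    · refine ⟨{u | u ∈ G.verts ∧ Reach (Ek G m) v u ∧ Reach (Ek G m) u v},
        ⟨v, hvV, rfl⟩, fun u hu => absurd ⟨u, hu⟩ hE⟩
  · rintro ⟨hnone, S, hS, hall⟩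
    intro u hu
    refine ⟨?_, hnone u⟩
    obtain ⟨s, hsW, rfl⟩ := hS
    have hreach_eq : ∀ w, Reach (Ek G m) v w → w = v := by
      intro w hw
      rcases hw.cases_head with h | ⟨c, hc, _⟩
      · exact h.symm
      · exact absurd hc (hnone c)
    have hvS : v ∉ {u | u ∈ G.verts ∧ Reach (Ek G m) s u ∧ Reach (Ek G m) u s} := by
      intro hvin
      have hsv : s = v := hreach_eq s hvin.2.2
      subst hsv
      have huS := hall u hu
      have : u = s := hreach_eq u huS.2.1
      subst this
      exact hnoloop hu
    have hUk : v ∈ Uk G m := by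
      by_contra hU
      obtain ⟨w, hw⟩ := exists_edge_of_not_Uk G m v hv hU
      exact hnone w hw
    simp only [Ek, deriv]
    right
    refine ⟨hu, ?_⟩
    simp only [Set.mem_iUnion]
    exact ⟨_, ⟨s, hsW, rfl⟩, ⟨⟨⟨⟨u, hall u hu, hu⟩, hvS⟩, hUk⟩, hall⟩⟩
end Games
end
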